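/- Define on ℝ⁷ (with coordinates X = (ξ₁, ξ₂, θ, φ, x, y, z)) the smooth vector fields F₁⁰(X) = (1, 0, 0, 0, (1/3)cos φ sin θ, (1/3)sin φ sin θ, (1/3)cos θ) and F₂⁰(X) = (0, 1, 0, 0, −(1/3)cos φ sin θ, −(1/3)sin φ sin θ, −(1/3)cos θ). Then the Lie bracket [F₁⁰, F₂⁰](X) := DF₂⁰(X)·F₁⁰(X) − DF₁⁰(X)·F₂⁰(X) vanishes for every X ∈ ℝ⁷. Consequently, every iterated Lie bracket of F₁⁰ and F₂⁰ involving at least one bracket (for instance [F₁⁰,[F₁⁰,F₂⁰]], [F₂⁰,[F₁⁰,F₂⁰]], [F₁⁰,[F₁⁰,[F₁⁰,F₂⁰]]], [F₂⁰,[F₂⁰,[F₁⁰,F₂⁰]]]) vanishes identically. -/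

import Mathlib

/-- Lie bracket of vector fields on ℝ⁷: `[F, G](X) = DG(X)·F(X) − DF(X)·G(X)`. -/
noncomputable def lieBracket (F G : (Fin 7 → ℝ) → (Fin 7 → ℝ)) :
    (Fin 7 → ℝ) → (Fin 7 → ℝ) :=
  fun X => fderiv ℝ G X (F X) - fderiv ℝ F X (G X)

/-- The leading-order control field
`F₁⁰(X) = (1, 0, 0, 0, (1/3)cos φ sin θ, (1/3)sin φ sin θ, (1/3)cos θ)`,
with coordinates `X = (ξ₁, ξ₂, θ, φ, x, y, z)` (so `θ = X 2`, `φ = X 3`). -/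
noncomputable def F10 (X : Fin 7 → ℝ) : Fin 7 → ℝ :=
  ![1, 0, 0, 0,
    (1 / 3) * Real.cos (X 3) * Real.sin (X 2),
    (1 / 3) * Real.sin (X 3) * Real.sin (X 2),
    (1 / 3) * Real.cos (X 2)]

/-- The leading-order control field
`F₂⁰(X) = (0, 1, 0, 0, −(1/3)cos φ sin θ, −(1/3)sin φ sin θ, −(1/3)cos θ)`. -/
noncomputable def F20 (X : Fin 7 → ℝ) : Fin 7 → ℝ :=
  ![0, 1, 0, 0,
    -((1 / 3) * Real.cos (X 3) * Real.sin (X 2)),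
    -((1 / 3) * Real.sin (X 3) * Real.sin (X 2)),
    -((1 / 3) * Real.cos (X 2))]

/-! Both fields depend on `X` only through the angles `θ = X 2` and `φ = X 3`, and neither has a
component in those two directions. Hence each field is constant along the other, so both terms of
`[F₁⁰, F₂⁰]` vanish; every further bracket then has the zero field as an argument. -/

/-- No differentiability is needed: where `f` is not differentiable, `fderiv` is `0` anyway. -/
theorem fderiv_apply_eq_zero_of_forall_add_smul {𝕜 E F : Type*} [NontriviallyNormedField 𝕜]
    [NormedAddCommGroup E] [NormedSpace 𝕜 E] [NormedAddCommGroup F] [NormedSpace 𝕜 F]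
    {f : E → F} {x v : E} (h : ∀ t : 𝕜, f (x + t • v) = f x) : fderiv 𝕜 f x v = 0 := by
  by_cases hf : DifferentiableAt 𝕜 f x
  · rw [← hf.lineDeriv_eq_fderiv, lineDeriv]
    simp only [h, deriv_const]
  · simp [fderiv_zero_of_not_differentiableAt hf]

theorem lieBracket_zero_right (F : (Fin 7 → ℝ) → (Fin 7 → ℝ)) : lieBracket F 0 = 0 := by
  funext X
  simp [lieBracket, fderiv_zero]

section Angles

variable {X v : Fin 7 → ℝ}

theorem F10_add_smul (h2 : v 2 = 0) (h3 : v 3 = 0) (t : ℝ) : F10 (X + t • v) = F10 X := by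
  simp [F10, h2, h3]

theorem F20_add_smul (h2 : v 2 = 0) (h3 : v 3 = 0) (t : ℝ) : F20 (X + t • v) = F20 X := by
  simp [F20, h2, h3]

theorem fderiv_F10_apply_eq_zero (h2 : v 2 = 0) (h3 : v 3 = 0) : fderiv ℝ F10 X v = 0 :=
  fderiv_apply_eq_zero_of_forall_add_smul (F10_add_smul h2 h3)

theorem fderiv_F20_apply_eq_zero (h2 : v 2 = 0) (h3 : v 3 = 0) : fderiv ℝ F20 X v = 0 :=
  fderiv_apply_eq_zero_of_forall_add_smul (F20_add_smul h2 h3)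

end Angles

theorem lieBracket_F10_F20 : lieBracket F10 F20 = 0 := by
  funext X
  have hF20 : fderiv ℝ F20 X (F10 X) = 0 :=
    fderiv_F20_apply_eq_zero (by simp [F10]) (by simp [F10])
  have hF10 : fderiv ℝ F10 X (F20 X) = 0 :=
    fderiv_F10_apply_eq_zero (by simp [F20]) (by simp [F20])
  simp [lieBracket, hF20, hF10]

/-- The Lie bracket `[F₁⁰, F₂⁰]` vanishes identically, and consequently so does every
iterated bracket involving at least one bracket, for instance `[F₁⁰,[F₁⁰,F₂⁰]]`,
`[F₂⁰,[F₁⁰,F₂⁰]]`, `[F₁⁰,[F₁⁰,[F₁⁰,F₂⁰]]]` and `[F₂⁰,[F₂⁰,[F₁⁰,F₂⁰]]]`. -/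
theorem flat_wall_fields_commute :
    (∀ X : Fin 7 → ℝ, lieBracket F10 F20 X = 0) ∧
    (∀ X : Fin 7 → ℝ, lieBracket F10 (lieBracket F10 F20) X = 0) ∧
    (∀ X : Fin 7 → ℝ, lieBracket F20 (lieBracket F10 F20) X = 0) ∧
    (∀ X : Fin 7 → ℝ, lieBracket F10 (lieBracket F10 (lieBracket F10 F20)) X = 0) ∧
    (∀ X : Fin 7 → ℝ, lieBracket F20 (lieBracket F20 (lieBracket F10 F20)) X = 0) := by
  refine ⟨?_, ?_, ?_, ?_, ?_⟩ <;> intro X <;>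
    simp only [lieBracket_F10_F20, lieBracket_zero_right, Pi.zero_apply]
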